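/- Let c ∈ (0,√2) and p ∈ (0,1) with p ≠ p₀. Then L(c,p,θ) tends, as θ → −∞, to the value M := (1/2)(1 + κ₂/κ₁) + (1/π)·arctan(−θ₁κ₂) − (κ₂/(πκ₁))·arctan(−θ₂κ₁). Moreover, if p > p₀ then M ∈ (1/2, 1 + κ₂/(2κ₁)). -/

import Mathlib

open Real Filter Set

/-- `ξ = p c⁴ / 4`. -/
noncomputable def xiPar (c p : ℝ) : ℝ := p * c ^ 4 / 4

/-- `κ₁ = √((c² − √(c⁴ − 4ξ))/2)`. -/
noncomputable def kappa1 (c p : ℝ) : ℝ :=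
  Real.sqrt ((c ^ 2 - Real.sqrt (c ^ 4 - 4 * xiPar c p)) / 2)

/-- `κ₂ = √((c² + √(c⁴ − 4ξ))/2)`. -/
noncomputable def kappa2 (c p : ℝ) : ℝ :=
  Real.sqrt ((c ^ 2 + Real.sqrt (c ^ 4 - 4 * xiPar c p)) / 2)

/-- The function `L(c,p,θ)` from the paper. -/
noncomputable def Lfun (c p θ : ℝ) : ℝ :=
  (1 / 2) * (1 + kappa2 c p / kappa1 c p)
  + (1 / Real.pi) * Real.arctan
      ((kappa2 c p * (-(kappa1 c p) ^ 2 + xiPar c p + xiPar c p * θ * Real.sqrt (2 - c ^ 2))) /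
       (xiPar c p * (θ * (kappa1 c p) ^ 2 + Real.sqrt (2 - c ^ 2) + θ * (1 - c ^ 2))))
  - (kappa2 c p / (kappa1 c p * Real.pi)) * Real.arctan
      ((kappa1 c p * (-(kappa2 c p) ^ 2 + xiPar c p + xiPar c p * θ * Real.sqrt (2 - c ^ 2))) /
       (xiPar c p * (θ * (kappa2 c p) ^ 2 + Real.sqrt (2 - c ^ 2) + θ * (1 - c ^ 2))))

/-- The discontinuity point `θ₁ = −2√(2−c²)/(2−c² − c²√(1−p))`. -/
noncomputable def theta1 (c p : ℝ) : ℝ :=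
  -2 * Real.sqrt (2 - c ^ 2) / (2 - c ^ 2 - c ^ 2 * Real.sqrt (1 - p))

/-- The discontinuity point `θ₂ = −2√(2−c²)/(2−c² + c²√(1−p))`. -/
noncomputable def theta2 (c p : ℝ) : ℝ :=
  -2 * Real.sqrt (2 - c ^ 2) / (2 - c ^ 2 + c ^ 2 * Real.sqrt (1 - p))

/-- The threshold `p₀ = 4(c²−1)/c⁴`. -/
noncomputable def p0 (c : ℝ) : ℝ := 4 * (c ^ 2 - 1) / c ^ 4

/-!
As `θ → -∞`, each arctan argument in `L` is a quotient of two affine functions of `θ`, so it tends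
to the quotient of their slopes. Since `κ₁² = c²(1 - √(1-p))/2` and `κ₂² = c²(1 + √(1-p))/2`, these
limits are `-θ₁κ₂` and `-θ₂κ₁`; the slope `ξ(κ₁² + 1 - c²) = ξ(2 - c² - c²√(1-p))/2` of the first
denominator vanishes exactly when `p = p₀`. For `p > p₀` both limits are positive, and
`arctan ∈ (0, π/2)` on `(0, ∞)` gives the bounds on `M`.
-/

open Topology

lemma tendsto_affine_div_affine_atBot (a b c d : ℝ) (hd : d ≠ 0) :
    Tendsto (fun θ : ℝ => (a + b * θ) / (c + d * θ)) atBot (𝓝 (b / d)) := by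
  have hinv : Tendsto (fun θ : ℝ => θ⁻¹) atBot (𝓝 0) := tendsto_inv_atBot_zero
  have hlim : Tendsto (fun θ : ℝ => (a * θ⁻¹ + b) / (c * θ⁻¹ + d)) atBot (𝓝 (b / d)) := by
    have h := ((hinv.const_mul a).add_const b).div ((hinv.const_mul c).add_const d)
      (by simpa using hd)
    simp only [mul_zero, zero_add] at h
    exact h
  refine hlim.congr' ?_
  filter_upwards [eventually_lt_atBot (0 : ℝ)] with θ hθ
  rw [← mul_div_mul_right _ _ hθ.ne, add_mul, add_mul, inv_mul_cancel_right₀ hθ.ne,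
    inv_mul_cancel_right₀ hθ.ne]

lemma tendsto_div_linear_atBot (k k' ξ w c : ℝ) (hξ : ξ ≠ 0) (hk' : k' ^ 2 + 1 - c ^ 2 ≠ 0) :
    Tendsto (fun θ : ℝ => k * (-k' ^ 2 + ξ + ξ * θ * w) / (ξ * (θ * k' ^ 2 + w + θ * (1 - c ^ 2))))
      atBot (𝓝 (k * w / (k' ^ 2 + 1 - c ^ 2))) := by
  have h := tendsto_affine_div_affine_atBot (k * (ξ - k' ^ 2)) (ξ * (k * w)) (ξ * w)
    (ξ * (k' ^ 2 + 1 - c ^ 2)) (mul_ne_zero hξ hk')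
  rw [mul_div_mul_left _ _ hξ] at h
  convert h using 2 with θ
  ring

section Kappa

variable {c p : ℝ}

lemma sqrt_sub_four_xiPar : √(c ^ 4 - 4 * xiPar c p) = c ^ 2 * √(1 - p) := by
  rw [show c ^ 4 - 4 * xiPar c p = (c ^ 2) ^ 2 * (1 - p) by unfold xiPar; ring,
    Real.sqrt_mul (sq_nonneg _), Real.sqrt_sq (sq_nonneg _)]

lemma kappa1_sq (hp : 0 ≤ p) : kappa1 c p ^ 2 = c ^ 2 * (1 - √(1 - p)) / 2 := by
  have : √(1 - p) ≤ 1 := Real.sqrt_le_one.mpr (by linarith)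
  unfold kappa1
  rw [sqrt_sub_four_xiPar, Real.sq_sqrt (by nlinarith [sq_nonneg c])]
  ring

lemma kappa2_sq : kappa2 c p ^ 2 = c ^ 2 * (1 + √(1 - p)) / 2 := by
  have := Real.sqrt_nonneg (1 - p)
  unfold kappa2
  rw [sqrt_sub_four_xiPar, Real.sq_sqrt (by nlinarith [sq_nonneg c])]
  ring

lemma kappa1_pos (hc : c ≠ 0) (hp : 0 < p) : 0 < kappa1 c p := by
  have hq : √(1 - p) < 1 := (Real.sqrt_lt' one_pos).mpr (by linarith)
  have hc2 : 0 < c ^ 2 := by positivity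
  unfold kappa1
  rw [sqrt_sub_four_xiPar]
  exact Real.sqrt_pos.mpr (by nlinarith)

lemma kappa2_pos (hc : c ≠ 0) : 0 < kappa2 c p := by
  have hq := Real.sqrt_nonneg (1 - p)
  have hc2 : 0 < c ^ 2 := by positivity
  unfold kappa2
  rw [sqrt_sub_four_xiPar]
  exact Real.sqrt_pos.mpr (by nlinarith)

lemma kappa1_sq_add_one_sub_sq (hp : 0 ≤ p) :
    kappa1 c p ^ 2 + 1 - c ^ 2 = (2 - c ^ 2 - c ^ 2 * √(1 - p)) / 2 := by
  rw [kappa1_sq hp]; ring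

lemma kappa2_sq_add_one_sub_sq :
    kappa2 c p ^ 2 + 1 - c ^ 2 = (2 - c ^ 2 + c ^ 2 * √(1 - p)) / 2 := by
  rw [kappa2_sq]; ring

lemma neg_theta1_mul_kappa2 (hp : 0 ≤ p) :
    -theta1 c p * kappa2 c p = kappa2 c p * √(2 - c ^ 2) / (kappa1 c p ^ 2 + 1 - c ^ 2) := by
  rw [kappa1_sq_add_one_sub_sq hp, theta1, div_div_eq_mul_div]
  ring

lemma neg_theta2_mul_kappa1 :
    -theta2 c p * kappa1 c p = kappa1 c p * √(2 - c ^ 2) / (kappa2 c p ^ 2 + 1 - c ^ 2) := by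
  rw [kappa2_sq_add_one_sub_sq, theta2, div_div_eq_mul_div]
  ring

lemma two_sub_sq_sub_ne_zero (hc : c ≠ 0) (hp : p ≤ 1) (hpp : p ≠ p0 c) :
    2 - c ^ 2 - c ^ 2 * √(1 - p) ≠ 0 := by
  intro h
  apply hpp
  have hsq : c ^ 4 * (1 - p) = (2 - c ^ 2) ^ 2 := by
    rw [← Real.sq_sqrt (sub_nonneg.mpr hp), show 2 - c ^ 2 = c ^ 2 * √(1 - p) by linarith]
    ring
  rw [p0, eq_div_iff (by positivity)]
  linear_combination -hsq

lemma two_sub_sq_sub_pos (hc : c ≠ 0) (hc2 : c ^ 2 < 2) (hpp : p0 c < p) :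
    0 < 2 - c ^ 2 - c ^ 2 * √(1 - p) := by
  have hc2' : 0 < c ^ 2 := by positivity
  have hlt : c ^ 4 * (1 - p) < (2 - c ^ 2) ^ 2 := by
    rw [p0, div_lt_iff₀ (by positivity)] at hpp
    linarith
  have : √(1 - p) < (2 - c ^ 2) / c ^ 2 := by
    rw [Real.sqrt_lt' (by positivity), div_pow, lt_div_iff₀ (by positivity)]
    linarith
  rw [lt_div_iff₀ hc2'] at this
  linarith

lemma neg_theta1_mul_kappa2_pos (hc : c ≠ 0) (hc2 : c ^ 2 < 2) (hp : 0 < p) (hpp : p0 c < p) :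
    0 < -theta1 c p * kappa2 c p := by
  rw [neg_theta1_mul_kappa2 hp.le, kappa1_sq_add_one_sub_sq hp.le]
  have := two_sub_sq_sub_pos hc hc2 hpp
  have := kappa2_pos (p := p) hc
  have : 0 < √(2 - c ^ 2) := Real.sqrt_pos.mpr (by linarith)
  positivity

lemma neg_theta2_mul_kappa1_pos (hc : c ≠ 0) (hc2 : c ^ 2 < 2) (hp : 0 < p) :
    0 < -theta2 c p * kappa1 c p := by
  rw [neg_theta2_mul_kappa1, kappa2_sq_add_one_sub_sq]
  have := kappa1_pos hc hp
  have : 0 < √(2 - c ^ 2) := Real.sqrt_pos.mpr (by linarith)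
  have : 0 < 2 - c ^ 2 + c ^ 2 * √(1 - p) := by positivity
  positivity

lemma tendsto_Lfun_atBot (hξ : xiPar c p ≠ 0) (h₁ : kappa1 c p ^ 2 + 1 - c ^ 2 ≠ 0)
    (h₂ : kappa2 c p ^ 2 + 1 - c ^ 2 ≠ 0) :
    Tendsto (Lfun c p) atBot (𝓝 ((1 / 2) * (1 + kappa2 c p / kappa1 c p)
      + (1 / π) * arctan (kappa2 c p * √(2 - c ^ 2) / (kappa1 c p ^ 2 + 1 - c ^ 2))
      - (kappa2 c p / (kappa1 c p * π))
        * arctan (kappa1 c p * √(2 - c ^ 2) / (kappa2 c p ^ 2 + 1 - c ^ 2)))) := by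
  have t₁ := (continuous_arctan.tendsto _).comp
    (tendsto_div_linear_atBot (kappa2 c p) _ _ √(2 - c ^ 2) c hξ h₁)
  have t₂ := (continuous_arctan.tendsto _).comp
    (tendsto_div_linear_atBot (kappa1 c p) _ _ √(2 - c ^ 2) c hξ h₂)
  exact ((t₁.const_mul _).const_add _).sub (t₂.const_mul _)

end Kappa

lemma arctan_combination_mem_Ioo {k₁ k₂ x y : ℝ} (hk₁ : 0 < k₁) (hk₂ : 0 < k₂) (hx : 0 < x)
    (hy : 0 < y) :
    (1 / 2) * (1 + k₂ / k₁) + (1 / π) * arctan x - (k₂ / (π * k₁)) * arctan y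
      ∈ Ioo (1 / 2 : ℝ) (1 + k₂ / (2 * k₁)) := by
  have hx' : arctan x / π ∈ Ioo (0 : ℝ) (1 / 2) :=
    ⟨div_pos (arctan_pos.mpr hx) pi_pos,
      (div_lt_iff₀ pi_pos).mpr (by linarith [arctan_lt_pi_div_two x])⟩
  have hy' : arctan y / π ∈ Ioo (0 : ℝ) (1 / 2) :=
    ⟨div_pos (arctan_pos.mpr hy) pi_pos,
      (div_lt_iff₀ pi_pos).mpr (by linarith [arctan_lt_pi_div_two y])⟩
  have hr : 0 < k₂ / k₁ := div_pos hk₂ hk₁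
  have e : (1 / 2) * (1 + k₂ / k₁) + (1 / π) * arctan x - (k₂ / (π * k₁)) * arctan y
      = 1 / 2 + arctan x / π + k₂ / k₁ * (1 / 2 - arctan y / π) := by
    field_simp
    ring
  rw [e, show k₂ / (2 * k₁) = k₂ / k₁ * (1 / 2) by field_simp]
  constructor <;> nlinarith [hx'.1, hx'.2, hy'.1, hy'.2]

/-- For `c ∈ (0,√2)`, `p ∈ (0,1)`, `p ≠ p₀`, `L(c,p,θ)` tends as
`θ → −∞` to `M = (1/2)(1 + κ₂/κ₁) + (1/π)arctan(−θ₁κ₂) − (κ₂/(πκ₁))arctan(−θ₂κ₁)`;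
moreover if `p > p₀` then `M ∈ (1/2, 1 + κ₂/(2κ₁))`. -/
theorem stmt10 (c p : ℝ) (hc : c ∈ Set.Ioo 0 (Real.sqrt 2)) (hp : p ∈ Set.Ioo 0 1)
    (hpp : p ≠ p0 c)
    (M : ℝ)
    (hM : M = (1 / 2) * (1 + kappa2 c p / kappa1 c p)
        + (1 / Real.pi) * Real.arctan (-(theta1 c p) * kappa2 c p)
        - (kappa2 c p / (Real.pi * kappa1 c p)) * Real.arctan (-(theta2 c p) * kappa1 c p)) :
    Filter.Tendsto (fun θ => Lfun c p θ) Filter.atBot (nhds M) ∧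
    (p > p0 c → M ∈ Set.Ioo (1 / 2 : ℝ) (1 + kappa2 c p / (2 * kappa1 c p))) := by
  obtain ⟨hc0, hcs⟩ := hc
  obtain ⟨hp0, hp1⟩ := hp
  have hc : c ≠ 0 := hc0.ne'
  have hc2 : c ^ 2 < 2 := (Real.lt_sqrt hc0.le).mp hcs
  have hξ : xiPar c p ≠ 0 := by unfold xiPar; positivity
  have h₁ : kappa1 c p ^ 2 + 1 - c ^ 2 ≠ 0 := by
    rw [kappa1_sq_add_one_sub_sq hp0.le]
    exact div_ne_zero (two_sub_sq_sub_ne_zero hc hp1.le hpp) two_ne_zero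
  have h₂ : kappa2 c p ^ 2 + 1 - c ^ 2 ≠ 0 := by
    have : 0 ≤ c ^ 2 * √(1 - p) := by positivity
    rw [kappa2_sq_add_one_sub_sq]
    linarith
  refine ⟨?_, fun hp₀ => hM ▸ arctan_combination_mem_Ioo (kappa1_pos hc hp0) (kappa2_pos hc)
    (neg_theta1_mul_kappa2_pos hc hc2 hp0 hp₀) (neg_theta2_mul_kappa1_pos hc hc2 hp0)⟩
  rw [hM, mul_comm π, neg_theta1_mul_kappa2 hp0.le, neg_theta2_mul_kappa1]
  exact tendsto_Lfun_atBot hξ h₁ h₂
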